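/- arXiv:1804.04230 — 5 statements merged into one kernel-verified Lean document; each statement's English description precedes it below -/
import Mathlib

section
/- For a continuous-time linear system ẋ = Ax + Bu with A ∈ ℝ^{n×n}, B ∈ ℝ^{n×m}, and controllability matrix 𝒞 = [B, AB, ..., A^{n-1}B], a set of states 𝒳 ⊆ {1,...,n} is herdable if and only if there exists a vector k in the range (column space) of 𝒞 such that k_i > 0 for all i ∈ 𝒳. -/
open Matrix NormedSpace MeasureTheory intervalIntegral
set_option synthInstance.maxHeartbeats 1000000
set_option maxHeartbeats 1000000


/-- The controllability matrix `𝒞 = [B, AB, ..., A^{n-1}B]`, with column index `(d, j)`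
corresponding to the `j`-th column of `A^d B` (i.e. flat column `m*d + j`). -/
def ctrbMat {n m : ℕ} (A : Matrix (Fin n) (Fin n) ℝ) (B : Matrix (Fin n) (Fin m) ℝ) :
    Matrix (Fin n) (Fin n × Fin m) ℝ :=
  Matrix.of fun i dj => (A ^ (dj.1 : ℕ) * B) i dj.2

/-- A set of states `X` is herdable if from every initial condition and for every threshold
`h ≥ 0` there are a finite time `tf`, an input `u` and a corresponding solution `x` of
`ẋ = Ax + Bu` with `x(tf)_i ≥ h` for all `i ∈ X`. -/
def Herdable {n m : ℕ} (A : Matrix (Fin n) (Fin n) ℝ) (B : Matrix (Fin n) (Fin m) ℝ)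
    (X : Set (Fin n)) : Prop :=
  ∀ (x0 : Fin n → ℝ) (h : ℝ), 0 ≤ h →
    ∃ (tf : ℝ) (u : ℝ → Fin m → ℝ) (x : ℝ → Fin n → ℝ),
      0 ≤ tf ∧ x 0 = x0 ∧
      (∀ t ∈ Set.Icc (0 : ℝ) tf, HasDerivAt x (A.mulVec (x t) + B.mulVec (u t)) t) ∧
      ∀ i ∈ X, h ≤ x tf i


variable {n m : ℕ}

noncomputable def Rsub (A : Matrix (Fin n) (Fin n) ℝ) (B : Matrix (Fin n) (Fin m) ℝ) :
    Submodule ℝ (Fin n → ℝ) := LinearMap.range (ctrbMat A B).mulVecLin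

lemma ctrb_decomp (A : Matrix (Fin n) (Fin n) ℝ) (B : Matrix (Fin n) (Fin m) ℝ)
    (α : Fin n × Fin m → ℝ) :
    (ctrbMat A B).mulVec α =
      ∑ d : Fin n, (A ^ (d : ℕ) * B).mulVec (fun j => α (d, j)) := by
  funext i
  simp only [mulVec, dotProduct, Finset.sum_apply, ctrbMat, Matrix.of_apply]
  rw [← Finset.sum_product']
  exact Finset.sum_congr rfl fun p _ => rfl

lemma sum_mulVec' {ι : Type*} (s : Finset ι) (f : ι → Matrix (Fin n) (Fin m) ℝ)
    (v : Fin m → ℝ) : (∑ i ∈ s, f i) *ᵥ v = ∑ i ∈ s, (f i) *ᵥ v := by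
  classical
  induction s using Finset.induction with
  | empty => simp
  | insert _ _ h ih => rw [Finset.sum_insert h, Finset.sum_insert h, Matrix.add_mulVec, ih]

lemma pow_mul_B_mem (A : Matrix (Fin n) (Fin n) ℝ) (B : Matrix (Fin n) (Fin m) ℝ)
    (d : ℕ) (β : Fin m → ℝ) : (A ^ d * B).mulVec β ∈ Rsub A B := by
  rcases Nat.eq_zero_or_pos n with h0 | hn1
  · subst h0
    have : (A ^ d * B) *ᵥ β = 0 := Subsingleton.elim _ _
    rw [this]; exact zero_mem _
  induction d using Nat.strong_induction_on with
  | _ d ih =>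
    rcases lt_or_ge d n with hd | hd
    · refine ⟨fun dj => if dj.1 = (⟨d, hd⟩ : Fin n) then β dj.2 else 0, ?_⟩
      rw [mulVecLin_apply, ctrb_decomp]
      rw [Finset.sum_eq_single (⟨d, hd⟩ : Fin n)]
      · simp
      · intro b _ hb
        have : ∀ j, (fun j => if (b, j).1 = (⟨d, hd⟩ : Fin n) then β (b, j).2 else 0) j = 0 := by
          intro j; simp [hb]
        rw [show (fun j => if (b, j).1 = (⟨d, hd⟩ : Fin n) then β (b, j).2 else 0) = 0 from
          funext this]
        simp [mulVec_zero]
      · intro h; exact absurd (Finset.mem_univ _) h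
    · -- use Cayley–Hamilton
      have hn : (A.charpoly).natDegree = n := by simp [A.charpoly_natDegree_eq_dim]
      have hCH := A.aeval_self_charpoly
      rw [Polynomial.aeval_eq_sum_range, hn, Finset.sum_range_succ] at hCH
      have hc : A.charpoly.coeff n = 1 := by
        have h1 := A.charpoly_monic.coeff_natDegree
        rwa [hn] at h1
      rw [hc, one_smul] at hCH
      have hAn : A ^ n = ∑ x ∈ Finset.range n, (-(A.charpoly.coeff x)) • A ^ x := by
        have h := eq_neg_of_add_eq_zero_right hCH
        rw [h]
        simp [neg_smul]
      have hAd : A ^ d * B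
          = ∑ x ∈ Finset.range n, (-(A.charpoly.coeff x)) • (A ^ (d - n + x) * B) := by
        have h2 : A ^ d = A ^ (d - n) * A ^ n := by rw [← pow_add, Nat.sub_add_cancel hd]
        rw [h2, hAn]
        rw [Matrix.mul_sum, Matrix.sum_mul]
        refine Finset.sum_congr rfl fun x _ => ?_
        rw [Matrix.mul_smul, Matrix.smul_mul, ← pow_add]
      rw [hAd, sum_mulVec']
      refine Submodule.sum_mem _ fun x hx => ?_
      rw [Matrix.smul_mulVec]
      refine Submodule.smul_mem _ _ (ih _ ?_)
      have : x < n := Finset.mem_range.mp hx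
      omega


noncomputable def Lc (A : Matrix (Fin n) (Fin n) ℝ) : (Fin n → ℝ) →L[ℝ] (Fin n → ℝ) :=
  LinearMap.toContinuousLinearMap A.mulVecLin

noncomputable def Ee (A : Matrix (Fin n) (Fin n) ℝ) (t : ℝ) :
    (Fin n → ℝ) →L[ℝ] (Fin n → ℝ) := exp (t • Lc A)

@[simp] lemma Lc_apply (A : Matrix (Fin n) (Fin n) ℝ) (v : Fin n → ℝ) :
    Lc A v = A.mulVec v := rfl

lemma hasDerivAt_Ee (A : Matrix (Fin n) (Fin n) ℝ) (t : ℝ) :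
    HasDerivAt (Ee A) (Lc A * Ee A t) t := hasDerivAt_exp_smul_const' (Lc A) t

@[simp] lemma Ee_zero (A : Matrix (Fin n) (Fin n) ℝ) : Ee A 0 = 1 := by
  simp [Ee, exp_zero]

noncomputable instance instNARatCLM : NormedAlgebra ℚ ((Fin n → ℝ) →L[ℝ] (Fin n → ℝ)) :=
  NormedAlgebra.restrictScalars ℚ ℝ _

lemma Ee_add (A : Matrix (Fin n) (Fin n) ℝ) (s t : ℝ) :
    Ee A (s + t) = Ee A s * Ee A t := by
  rw [Ee, add_smul]
  exact NormedSpace.exp_add_of_commute (((Commute.refl (Lc A)).smul_left s).smul_right t)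

lemma Ee_comm (A : Matrix (Fin n) (Fin n) ℝ) (t : ℝ) : Commute (Lc A) (Ee A t) :=
  ((Commute.refl (Lc A)).smul_right t).exp_right

lemma Ee_neg_cancel (A : Matrix (Fin n) (Fin n) ℝ) (t : ℝ) (v : Fin n → ℝ) :
    Ee A t (Ee A (-t) v) = v := by
  have : Ee A t * Ee A (-t) = 1 := by rw [← Ee_add]; simp
  have := congrArg (fun T => T v) this
  simpa using this

lemma continuous_Ee (A : Matrix (Fin n) (Fin n) ℝ) : Continuous (Ee A) :=
  exp_continuous.comp (continuous_id.smul continuous_const)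

lemma B_mem (A : Matrix (Fin n) (Fin n) ℝ) (B : Matrix (Fin n) (Fin m) ℝ) (β : Fin m → ℝ) :
    B.mulVec β ∈ Rsub A B := by
  have := pow_mul_B_mem A B 0 β
  simpa using this

lemma A_smul_mem (A : Matrix (Fin n) (Fin n) ℝ) (B : Matrix (Fin n) (Fin m) ℝ)
    {v : Fin n → ℝ} (hv : v ∈ Rsub A B) : A.mulVec v ∈ Rsub A B := by
  obtain ⟨α, rfl⟩ := hv
  rw [mulVecLin_apply, ctrb_decomp]
  have : A.mulVec (∑ d : Fin n, (A ^ (d : ℕ) * B).mulVec (fun j => α (d, j)))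
      = ∑ d : Fin n, (A ^ ((d : ℕ) + 1) * B).mulVec (fun j => α (d, j)) := by
    rw [← Matrix.mulVecLin_apply, map_sum]
    refine Finset.sum_congr rfl fun d _ => ?_
    rw [mulVecLin_apply, Matrix.mulVec_mulVec, ← Matrix.mul_assoc, ← pow_succ']
  rw [this]
  exact Submodule.sum_mem _ fun d _ => pow_mul_B_mem A B _ _

lemma Lc_pow_apply (A : Matrix (Fin n) (Fin n) ℝ) (k : ℕ) (v : Fin n → ℝ) :
    ((Lc A) ^ k) v = (A ^ k).mulVec v := by
  induction k generalizing v with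
  | zero => simp
  | succ k ih =>
    rw [pow_succ, ContinuousLinearMap.mul_apply, ih,
      show A ^ (k+1) = A ^ k * A from pow_succ A k, ← Matrix.mulVec_mulVec]
    rfl

lemma Ee_mem (A : Matrix (Fin n) (Fin n) ℝ) (B : Matrix (Fin n) (Fin m) ℝ) (t : ℝ)
    {v : Fin n → ℝ} (hv : v ∈ Rsub A B) : Ee A t v ∈ Rsub A B := by
  classical
  have hterm : ∀ k : ℕ, ((k.factorial : ℝ)⁻¹ • ((t • Lc A) ^ k)) v ∈ Rsub A B := by
    intro k
    have hk : ((t • Lc A) ^ k) v ∈ Rsub A B := by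
      rw [smul_pow, ContinuousLinearMap.smul_apply, Lc_pow_apply]
      refine Submodule.smul_mem _ _ ?_
      induction k with
      | zero => simpa using hv
      | succ k ih =>
        rw [pow_succ', ← Matrix.mulVec_mulVec]
        exact A_smul_mem A B ih
    simpa using Submodule.smul_mem _ ((k.factorial : ℝ)⁻¹) hk
  have hsummable : Summable fun k : ℕ => ((k.factorial : ℝ)⁻¹ • ((t • Lc A) ^ k)) :=
    NormedSpace.expSeries_summable' (𝕂 := ℝ) (t • Lc A)
  have happ : Summable fun k : ℕ => ((k.factorial : ℝ)⁻¹ • ((t • Lc A) ^ k)) v :=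
    hsummable.map (ContinuousLinearMap.apply ℝ (Fin n → ℝ) v)
      (ContinuousLinearMap.apply ℝ (Fin n → ℝ) v).continuous
  have hEe : Ee A t v = ∑' k : ℕ, ((k.factorial : ℝ)⁻¹ • ((t • Lc A) ^ k)) v := by
    rw [Ee, NormedSpace.exp_eq_tsum ℝ]
    exact ((ContinuousLinearMap.apply ℝ (Fin n → ℝ) v).map_tsum hsummable)
  rw [hEe]
  have hclosed : IsClosed (Rsub A B : Set (Fin n → ℝ)) :=
    Submodule.closed_of_finiteDimensional _
  have := happ.hasSum
  refine hclosed.mem_of_tendsto this.tendsto_sum_nat ?_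
  exact Filter.Eventually.of_forall fun N => Submodule.sum_mem _ fun k _ => hterm k


lemma mem_of_forall_dual {p : Submodule ℝ (Fin n → ℝ)} {x : Fin n → ℝ}
    (hx : ∀ φ : Module.Dual ℝ (Fin n → ℝ), (∀ y ∈ p, φ y = 0) → φ x = 0) : x ∈ p := by
  by_contra hxp
  have hq : p.mkQ x ≠ 0 := by
    simpa [Submodule.Quotient.mk_eq_zero] using hxp
  obtain ⟨ψ, hψ⟩ : ∃ ψ : Module.Dual ℝ ((Fin n → ℝ) ⧸ p), ψ (p.mkQ x) ≠ 0 := by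
    by_contra hall
    push_neg at hall
    exact hq ((Module.forall_dual_apply_eq_zero_iff ℝ _).mp hall)
  refine hψ (hx (ψ.comp p.mkQ) fun y hy => ?_)
  simp [Submodule.Quotient.mk_eq_zero, hy, (Submodule.Quotient.mk_eq_zero p).mpr hy]

lemma zero_of_integral_mul_zero {g : ℝ → ℝ} (hg : Continuous g)
    (h : ∀ w : ℝ → ℝ, Continuous w → ∫ s in (0:ℝ)..1, g s * w s = 0) :
    ∀ s ∈ Set.Ioo (0:ℝ) 1, g s = 0 := by
  intro c hc
  by_contra hgc
  have h2 := h g hg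
  have hnn : ∀ s, 0 ≤ g s * g s := fun s => mul_self_nonneg _
  have hint : IntervalIntegrable (fun s => g s * g s) volume 0 1 :=
    (hg.mul hg).intervalIntegrable _ _
  have hae : (fun s => g s * g s) =ᵐ[volume.restrict (Set.Ioc (0:ℝ) 1)] 0 := by
    rw [← intervalIntegral.integral_eq_zero_iff_of_le_of_nonneg_ae zero_le_one
      (Filter.Eventually.of_forall hnn) hint]
    exact h2
  set U : Set ℝ := {s | g s ≠ 0} ∩ Set.Ioo 0 1 with hU
  have hUopen : IsOpen U := (isOpen_compl_iff.mpr (isClosed_eq hg continuous_const)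
    |>.inter isOpen_Ioo)
  have hUne : U.Nonempty := ⟨c, hgc, hc⟩
  have hUpos : 0 < volume U := hUopen.measure_pos volume hUne
  have : volume U = 0 := by
    have hae' := ae_restrict_iff' measurableSet_Ioc |>.mp hae
    rw [MeasureTheory.ae_iff] at hae'
    refine le_antisymm (le_trans (measure_mono ?_) (le_of_eq hae')) (by simp)
    intro s hs
    simp only [Set.mem_setOf_eq]
    intro hcon
    exact hs.1 (by
      have := hcon ⟨hs.2.1, le_of_lt hs.2.2⟩
      simpa [mul_self_eq_zero] using this)
  exact absurd this (ne_of_gt hUpos)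

lemma continuous_Ee_neg_apply (A : Matrix (Fin n) (Fin n) ℝ) {f : ℝ → Fin n → ℝ}
    (hf : Continuous f) : Continuous fun s => Ee A (-s) (f s) :=
  ((continuous_Ee A).comp continuous_neg).clm_apply hf

lemma continuous_mulVecB (B : Matrix (Fin n) (Fin m) ℝ) {u : ℝ → Fin m → ℝ}
    (hu : Continuous u) : Continuous fun s => B.mulVec (u s) := by
  have : Continuous fun v : Fin m → ℝ => B.mulVec v :=
    LinearMap.continuous_of_finiteDimensional B.mulVecLin
  exact this.comp hu

noncomputable def Smod (A : Matrix (Fin n) (Fin n) ℝ) (B : Matrix (Fin n) (Fin m) ℝ) :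
    Submodule ℝ (Fin n → ℝ) where
  carrier := {y | ∃ u : ℝ → Fin m → ℝ, Continuous u ∧
    y = ∫ s in (0:ℝ)..1, Ee A (-s) (B.mulVec (u s))}
  zero_mem' := ⟨0, continuous_const, by simp⟩
  add_mem' := by
    rintro y₁ y₂ ⟨u₁, hu₁, rfl⟩ ⟨u₂, hu₂, rfl⟩
    refine ⟨u₁ + u₂, hu₁.add hu₂, ?_⟩
    have h₁ : IntervalIntegrable (fun s => Ee A (-s) (B.mulVec (u₁ s))) volume 0 1 :=
      (continuous_Ee_neg_apply A (continuous_mulVecB B hu₁)).intervalIntegrable _ _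
    have h₂ : IntervalIntegrable (fun s => Ee A (-s) (B.mulVec (u₂ s))) volume 0 1 :=
      (continuous_Ee_neg_apply A (continuous_mulVecB B hu₂)).intervalIntegrable _ _
    rw [← intervalIntegral.integral_add h₁ h₂]
    refine intervalIntegral.integral_congr fun s _ => ?_
    simp [Matrix.mulVec_add]
  smul_mem' := by
    rintro c y ⟨u, hu, rfl⟩
    refine ⟨c • u, hu.const_smul c, ?_⟩
    rw [← intervalIntegral.integral_smul]
    refine intervalIntegral.integral_congr fun s _ => ?_
    simp [Matrix.mulVec_smul]

lemma R_le_Smod (A : Matrix (Fin n) (Fin n) ℝ) (B : Matrix (Fin n) (Fin m) ℝ) :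
    Rsub A B ≤ Smod A B := by
  intro x hx
  apply mem_of_forall_dual
  intro φ hφ
  set φc : (Fin n → ℝ) →L[ℝ] ℝ := LinearMap.toContinuousLinearMap φ with hφc
  have hφeq : ∀ v, φc v = φ v := fun v => rfl
  -- Step: for each β, φ (A^k *ᵥ (B *ᵥ β)) = 0 for all k
  have key : ∀ (k : ℕ) (β : Fin m → ℝ), φ ((A ^ k * B).mulVec β) = 0 := by
    intro k β
    set b := B.mulVec β with hb
    set g : ℕ → ℝ → ℝ := fun k s => φc (((Lc A) ^ k) (Ee A (-s) b)) with hg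
    have hgcont : ∀ k, Continuous (g k) := by
      intro k
      exact φc.continuous.comp (((Lc A) ^ k).continuous.comp
        (continuous_Ee_neg_apply A continuous_const))
    have hstep0 : ∀ s ∈ Set.Ioo (0:ℝ) 1, g 0 s = 0 := by
      have hint0 : ∀ w : ℝ → ℝ, Continuous w → ∫ s in (0:ℝ)..1, g 0 s * w s = 0 := by
        intro w hw
        have hmem : (∫ s in (0:ℝ)..1, Ee A (-s) (B.mulVec (w s • β))) ∈ Smod A B :=
          ⟨fun s => w s • β, hw.smul continuous_const, rfl⟩
        have h0 := hφ _ hmem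
        have hInt : IntervalIntegrable (fun s => Ee A (-s) (B.mulVec (w s • β))) volume 0 1 :=
          (continuous_Ee_neg_apply A (continuous_mulVecB B (hw.smul continuous_const))
            ).intervalIntegrable _ _
        calc ∫ s in (0:ℝ)..1, g 0 s * w s
            = ∫ s in (0:ℝ)..1, φc (Ee A (-s) (B.mulVec (w s • β))) := by
              refine intervalIntegral.integral_congr fun s _ => ?_
              simp only [hg, pow_zero, ContinuousLinearMap.one_apply, Matrix.mulVec_smul,
                _root_.map_smul, smul_eq_mul]
              ring
          _ = φc (∫ s in (0:ℝ)..1, Ee A (-s) (B.mulVec (w s • β))) :=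
              φc.intervalIntegral_comp_comm hInt
          _ = 0 := by rw [hφeq]; exact h0
      exact zero_of_integral_mul_zero (hgcont 0) hint0
    have hderiv : ∀ k s, HasDerivAt (g k) (-(g (k+1) s)) s := by
      intro k s
      have h1 : HasDerivAt (fun s : ℝ => Ee A (-s)) ((-1 : ℝ) • (Lc A * Ee A (-s))) s :=
        (hasDerivAt_Ee A (-s)).scomp s (hasDerivAt_neg s)
      have h2 : HasDerivAt (fun s : ℝ => Ee A (-s) b)
          (((-1 : ℝ) • (Lc A * Ee A (-s))) b + Ee A (-s) 0) s :=
        h1.clm_apply (hasDerivAt_const s b)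
      have h3 := (φc.comp ((Lc A) ^ k)).hasFDerivAt.comp_hasDerivAt s h2
      convert h3 using 1
      case e'_4 => rfl
      case e'_5 => rfl
      case e'_8 => rfl
      simp only [hg, ContinuousLinearMap.coe_comp', Function.comp_apply, map_zero, add_zero,
        ContinuousLinearMap.smul_apply, ContinuousLinearMap.mul_apply, _root_.map_smul, neg_smul,
        one_smul, smul_eq_mul, neg_mul, one_mul, neg_inj, _root_.map_neg]
      try rw [pow_succ, ContinuousLinearMap.mul_apply]
    -- all g k vanish on Ioo 0 1
    have hzero : ∀ k, ∀ s ∈ Set.Ioo (0:ℝ) 1, g k s = 0 := by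
      intro k
      induction k with
      | zero => exact hstep0
      | succ k ih =>
        intro s hs
        have hev : g k =ᶠ[nhds s] fun _ => 0 :=
          Filter.eventuallyEq_of_mem (isOpen_Ioo.mem_nhds hs) ih
        have hzero' : HasDerivAt (g k) 0 s :=
          (hasDerivAt_const s (0:ℝ)).congr_of_eventuallyEq hev
        have := (hderiv k s).unique hzero'
        linarith [this]
    -- take limits at 0
    have hlim : ∀ k : ℕ, g k 0 = 0 := by
      intro k
      haveI : Filter.NeBot (nhdsWithin (0:ℝ) (Set.Ioo 0 1)) := by
        rw [← mem_closure_iff_nhdsWithin_neBot, closure_Ioo one_ne_zero.symm]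
        exact ⟨le_refl 0, zero_le_one⟩
      have h1 : Filter.Tendsto (g k) (nhdsWithin (0:ℝ) (Set.Ioo 0 1)) (nhds (g k 0)) :=
        ((hgcont k).continuousAt).continuousWithinAt
      have h2 : Filter.Tendsto (g k) (nhdsWithin (0:ℝ) (Set.Ioo 0 1)) (nhds 0) := by
        refine Filter.Tendsto.congr' ?_ tendsto_const_nhds
        exact Filter.eventuallyEq_of_mem self_mem_nhdsWithin fun s hs => (hzero k s hs).symm
      exact tendsto_nhds_unique h1 h2
    have := hlim k
    rw [hg] at this
    simp only [neg_zero, Ee_zero, ContinuousLinearMap.one_apply] at this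
    rw [← hφeq, ← Matrix.mulVec_mulVec, ← Lc_pow_apply]
    exact this
  -- conclude φ x = 0
  obtain ⟨α, rfl⟩ := hx
  rw [mulVecLin_apply, ctrb_decomp, map_sum]
  exact Finset.sum_eq_zero fun d _ => key _ _

lemma reach (A : Matrix (Fin n) (Fin n) ℝ) (B : Matrix (Fin n) (Fin m) ℝ)
    (x0 : Fin n → ℝ) {y : Fin n → ℝ} (hy : y ∈ Smod A B) :
    ∃ (u : ℝ → Fin m → ℝ) (x : ℝ → Fin n → ℝ), x 0 = x0 ∧
      (∀ t : ℝ, HasDerivAt x (A.mulVec (x t) + B.mulVec (u t)) t) ∧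
      x 1 = Ee A 1 (x0 + y) := by
  obtain ⟨u, hu, rfl⟩ := hy
  set f : ℝ → Fin n → ℝ := fun s => Ee A (-s) (B.mulVec (u s)) with hf
  have hfc : Continuous f := continuous_Ee_neg_apply A (continuous_mulVecB B hu)
  refine ⟨u, fun t => Ee A t (x0 + ∫ s in (0:ℝ)..t, f s), ?_, ?_, rfl⟩
  · simp
  · intro t
    have hI : HasDerivAt (fun t : ℝ => x0 + ∫ s in (0:ℝ)..t, f s) (f t) t :=
      ((hfc.integral_hasStrictDerivAt 0 t).hasDerivAt).const_add x0
    have hE : HasDerivAt (Ee A) (Lc A * Ee A t) t := hasDerivAt_Ee A t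
    have h2 := hE.clm_apply hI
    convert h2 using 1
    case e'_4 => rfl
    case e'_5 => rfl
    case e'_6 => rfl
    rw [ContinuousLinearMap.mul_apply]
    congr 1
    exact (Ee_neg_cancel A t (B.mulVec (u t))).symm

theorem herdable_set_iff_exists_pos_in_range_ctrb'
    (A : Matrix (Fin n) (Fin n) ℝ) (B : Matrix (Fin n) (Fin m) ℝ)
    (X : Set (Fin n)) :
    Herdable A B X ↔
      ∃ k : Fin n → ℝ, (∃ α : Fin n × Fin m → ℝ, (ctrbMat A B).mulVec α = k) ∧
        ∀ i ∈ X, 0 < k i := by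
  constructor
  · intro hH
    obtain ⟨tf, u, x, htf, hx0, hode, hge⟩ := hH 0 1 zero_le_one
    have hmem : x tf ∈ Rsub A B := by
      have h1 : Ee A (-tf) (x tf) ∈ Rsub A B := by
        apply mem_of_forall_dual
        intro φ hφ
        set φc : (Fin n → ℝ) →L[ℝ] ℝ := LinearMap.toContinuousLinearMap φ with hφc
        have hφeq : ∀ v, φc v = φ v := fun v => rfl
        set v : ℝ → Fin n → ℝ := fun t => Ee A (-t) (x t) with hv
        have hvd : ∀ t ∈ Set.Icc (0:ℝ) tf,
            HasDerivAt v (Ee A (-t) (B.mulVec (u t))) t := by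
          intro t ht
          have h1 : HasDerivAt (fun s : ℝ => Ee A (-s)) ((-1 : ℝ) • (Lc A * Ee A (-t))) t :=
            (hasDerivAt_Ee A (-t)).scomp t (hasDerivAt_neg t)
          have h2 := h1.clm_apply (hode t ht)
          convert h2 using 1
          case e'_4 => rfl
          case e'_5 => rfl
          case e'_6 => rfl
          have hcm : Ee A (-t) (Lc A (x t)) = Lc A (Ee A (-t) (x t)) := by
            have := congrArg (fun T => T (x t)) (Ee_comm A (-t)).eq
            simpa [ContinuousLinearMap.mul_apply] using this.symm
          simp only [ContinuousLinearMap.smul_apply, ContinuousLinearMap.mul_apply,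
            neg_smul, one_smul, map_add]
          rw [show A.mulVec (x t) = Lc A (x t) from rfl, hcm]
          exact (neg_add_cancel_left _ _).symm
        -- zero derivative of φc ∘ v on the interval
        have hconst : ∀ s ∈ Set.Icc (0:ℝ) tf, φc (v s) = φc (v 0) := by
          refine constant_of_has_deriv_right_zero ?_ ?_
          · intro s hs
            exact ((φc.hasFDerivAt.comp_hasDerivAt s (hvd s hs)).continuousAt).continuousWithinAt
          · intro s hs
            have hd := φc.hasFDerivAt.comp_hasDerivAt s (hvd s (Set.Ico_subset_Icc_self hs))
            have hval : φc (Ee A (-s) (B.mulVec (u s))) = 0 :=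
              hφ _ (Ee_mem A B (-s) (B_mem A B (u s)))
            rw [Function.comp_def] at hd
            rw [hval] at hd
            exact hd.hasDerivWithinAt
        have h0 : φc (v 0) = 0 := by
          simp [hv, hx0]
        have htfmem : tf ∈ Set.Icc (0:ℝ) tf := ⟨htf, le_refl tf⟩
        have := hconst tf htfmem
        rw [h0] at this
        exact this
      have := Ee_mem A B tf h1
      rwa [Ee_neg_cancel A tf (x tf)] at this
    obtain ⟨α, hα⟩ := hmem
    exact ⟨x tf, ⟨α, by rw [← mulVecLin_apply]; exact hα⟩,
      fun i hi => lt_of_lt_of_le one_pos (hge i hi)⟩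
  · rintro ⟨k, ⟨α, hα⟩, hkpos⟩
    intro x0 h hh
    have hkR : k ∈ Rsub A B := ⟨α, by rw [mulVecLin_apply, hα]⟩
    set w : Fin n → ℝ := Ee A 1 x0 with hw
    set c : ℝ := ∑ i : Fin n, if 0 < k i then max 0 ((h - w i) / k i) else 0 with hc
    have hck : ∀ i ∈ X, h - w i ≤ c * k i := by
      intro i hi
      have hki := hkpos i hi
      have h1 : (if 0 < k i then max 0 ((h - w i) / k i) else 0) ≤ c :=
        Finset.single_le_sum (f := fun i => if 0 < k i then max 0 ((h - w i) / k i) else 0)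
          (fun j _ => by by_cases hj : 0 < k j <;> simp [hj, le_max_left]) (Finset.mem_univ i)
      rw [if_pos hki] at h1
      have h2 : (h - w i) / k i ≤ c := le_trans (le_max_right _ _) h1
      calc h - w i = ((h - w i) / k i) * k i := by field_simp
        _ ≤ c * k i := mul_le_mul_of_nonneg_right h2 (le_of_lt hki)
    have hy : c • (Ee A (-1) k) ∈ Smod A B :=
      R_le_Smod A B (Submodule.smul_mem _ c (Ee_mem A B (-1) hkR))
    obtain ⟨u, x, hx0, hode, hx1⟩ := reach A B x0 hy
    refine ⟨1, u, x, zero_le_one, hx0, fun t _ => hode t, fun i hi => ?_⟩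
    rw [hx1]
    have hE : Ee A 1 (x0 + c • Ee A (-1) k) = w + c • k := by
      rw [map_add, _root_.map_smul, Ee_neg_cancel]
    rw [hE]
    have := hck i hi
    simp only [Pi.add_apply, Pi.smul_apply, smul_eq_mul]
    linarith

/-- a set of states `X` is herdable iff some vector `k` in the range of the
controllability matrix satisfies `k i > 0` for all `i ∈ X`. -/
theorem herdable_set_iff_exists_pos_in_range_ctrb
    {n m : ℕ} (A : Matrix (Fin n) (Fin n) ℝ) (B : Matrix (Fin n) (Fin m) ℝ)
    (X : Set (Fin n)) :
    Herdable A B X ↔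
      ∃ k : Fin n → ℝ, (∃ α : Fin n × Fin m → ℝ, (ctrbMat A B).mulVec α = k) ∧
        ∀ i ∈ X, 0 < k i := by
  exact herdable_set_iff_exists_pos_in_range_ctrb' A B X
end

section
/- Let 𝒞 ∈ ℝ^{n×nm} be the controllability matrix of a linear system. If for every state i ∈ {1,...,n} there exists a column index j such that 𝒞_{i,j} ≠ 0 and the column 𝒞_{:,j} is unisigned (all its nonzero entries have the same sign), then the system is completely herdable, i.e., there exists an element-wise strictly positive vector in the range of 𝒞. -/
open Matrix

/-- A vector is unisigned if all its nonzero entries have the same sign. -/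
def Unisigned {ι : Type*} (v : ι → ℝ) : Prop :=
  (∀ i, 0 ≤ v i) ∨ (∀ i, v i ≤ 0)

/-- if every row of the controllability matrix has a nonzero entry lying in a
unisigned column, then the system is completely herdable, i.e. there is an element-wise
strictly positive vector in the range of the controllability matrix. -/
theorem completely_herdable_of_unisigned_columns
    {n m : ℕ} (A : Matrix (Fin n) (Fin n) ℝ) (B : Matrix (Fin n) (Fin m) ℝ)
    (h : ∀ i : Fin n, ∃ j : Fin n × Fin m,
      ctrbMat A B i j ≠ 0 ∧ Unisigned fun r => ctrbMat A B r j) :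
    ∃ α : Fin n × Fin m → ℝ, ∀ i, 0 < (ctrbMat A B).mulVec α i := by
  classical
  set C := ctrbMat A B with hC
  choose f hf0 hfu using h
  -- sign for each chosen column
  set s : Fin n → ℝ := fun i => if ∀ r, 0 ≤ C r (f i) then 1 else -1 with hs
  refine ⟨fun j => ∑ i : Fin n, if f i = j then s i else 0, ?_⟩
  intro r
  have hterm : ∀ i : Fin n, 0 ≤ C r (f i) * s i := by
    intro i
    by_cases hpos : ∀ q, 0 ≤ C q (f i)
    · simp only [hs, if_pos hpos, mul_one]; exact hpos r
    · have hneg : ∀ q, C q (f i) ≤ 0 := (hfu i).resolve_left hpos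
      simp only [hs, if_neg hpos, mul_neg_one]
      linarith [hneg r]
  have hdiag : 0 < C r (f r) * s r := by
    have hne := hf0 r
    by_cases hpos : ∀ q, 0 ≤ C q (f r)
    · simp only [hs, if_pos hpos, mul_one]
      exact lt_of_le_of_ne (hpos r) (Ne.symm hne)
    · have hneg : ∀ q, C q (f r) ≤ 0 := (hfu r).resolve_left hpos
      simp only [hs, if_neg hpos, mul_neg_one]
      have := lt_of_le_of_ne (hneg r) hne
      linarith
  have : C.mulVec (fun j => ∑ i : Fin n, if f i = j then s i else 0) r
      = ∑ i : Fin n, C r (f i) * s i := by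
    simp only [Matrix.mulVec, dotProduct, Finset.mul_sum]
    rw [Finset.sum_comm]
    refine Finset.sum_congr rfl fun i _ => ?_
    rw [Finset.sum_eq_single (f i)]
    · simp
    · intro b _ hb; simp [Ne.symm hb]
    · simp
  rw [this]
  exact Finset.sum_pos' (fun i _ => hterm i) ⟨r, Finset.mem_univ r, hdiag⟩
end

section
/- If the linear system ẋ = Ax + Bu is completely herdable, then its graph is input connectable: every state node is reachable by a directed walk from some input node. Equivalently, if some state i is not reachable from any input in the system graph, then row i of the controllability matrix is zero and the system is not completely herdable. -/
open Matrix

/-- A walk of length `d+1` in the system graph from input node `u j` to state node `x i`: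
it consists of the edge `u j → x (p 0)` (present iff `B (p 0) j ≠ 0`) followed by the `d`
state edges `x (p t) → x (p (t+1))` (present iff the corresponding entry of `A` is nonzero),
ending at `p (last) = i`. -/
def IsWalk {n m : ℕ} (A : Matrix (Fin n) (Fin n) ℝ) (B : Matrix (Fin n) (Fin m) ℝ)
    (j : Fin m) (i : Fin n) (d : ℕ) (p : Fin (d + 1) → Fin n) : Prop :=
  B (p 0) j ≠ 0 ∧ (∀ t : Fin d, A (p t.succ) (p t.castSucc) ≠ 0) ∧ p (Fin.last d) = i

/-- The weight of a walk: the product of the weights of its edges. -/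
def walkWeight {n m : ℕ} (A : Matrix (Fin n) (Fin n) ℝ) (B : Matrix (Fin n) (Fin m) ℝ)
    (j : Fin m) {d : ℕ} (p : Fin (d + 1) → Fin n) : ℝ :=
  B (p 0) j * ∏ t : Fin d, A (p t.succ) (p t.castSucc)

/-- State node `x i` is reachable from input node `u j` by a directed walk. -/
def Reach {n m : ℕ} (A : Matrix (Fin n) (Fin n) ℝ) (B : Matrix (Fin n) (Fin m) ℝ)
    (j : Fin m) (i : Fin n) : Prop :=
  ∃ (d : ℕ) (p : Fin (d + 1) → Fin n), IsWalk A B j i d p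

/-- If an entry `(A^d * B) i j` is nonzero, there is a walk of length `d+1` from `u j`
to `x i` in the system graph. -/
lemma reach_of_pow_ne {n m : ℕ} (A : Matrix (Fin n) (Fin n) ℝ) (B : Matrix (Fin n) (Fin m) ℝ)
    (d : ℕ) : ∀ (i : Fin n) (j : Fin m), (A ^ d * B) i j ≠ 0 → Reach A B j i := by
  induction d with
  | zero =>
    intro i j h
    rw [pow_zero, Matrix.one_mul] at h
    exact ⟨0, fun _ => i, h, fun t => t.elim0, rfl⟩
  | succ e ih =>
    intro i j h
    rw [pow_succ', Matrix.mul_assoc, Matrix.mul_apply] at h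
    obtain ⟨k, -, hk⟩ := Finset.exists_ne_zero_of_sum_ne_zero h
    obtain ⟨d', p, hB, hA, hlast⟩ := ih k j (right_ne_zero_of_mul hk)
    refine ⟨d' + 1, Fin.snoc p i, ?_, ?_, ?_⟩
    · have : (0 : Fin (d' + 1 + 1)) = Fin.castSucc 0 := rfl
      rw [this, Fin.snoc_castSucc]; exact hB
    · intro t
      refine Fin.lastCases ?_ ?_ t
      · rw [Fin.succ_last, Fin.snoc_last, Fin.snoc_castSucc, hlast]
        exact left_ne_zero_of_mul hk
      · intro s
        rw [Fin.succ_castSucc, Fin.snoc_castSucc, Fin.snoc_castSucc]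
        exact hA s
    · exact Fin.snoc_last _ _

section AnalyticAux

open NormedSpace

variable {n m : ℕ}

attribute [local instance] Matrix.linftyOpNormedRing Matrix.linftyOpNormedAlgebra

local instance : CompleteSpace (Matrix (Fin n) (Fin n) ℝ) := FiniteDimensional.complete ℝ _

/-- Entry `(M * B) i j` as a continuous linear map in `M`. -/
noncomputable def entryMulCLM (B : Matrix (Fin n) (Fin m) ℝ) (i : Fin n) (j : Fin m) :
    Matrix (Fin n) (Fin n) ℝ →L[ℝ] ℝ :=
  LinearMap.toContinuousLinearMap
    { toFun := fun M => (M * B) i j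
      map_add' := by intro M N; simp [Matrix.add_mul]
      map_smul' := by intro c M; simp [Matrix.smul_mul] }

lemma exp_mul_entry_zero (A : Matrix (Fin n) (Fin n) ℝ) (B : Matrix (Fin n) (Fin m) ℝ)
    (i : Fin n) (hpow : ∀ (d : ℕ) (j : Fin m), (A ^ d * B) i j = 0) (s : ℝ) (j : Fin m) :
    (exp (s • A) * B) i j = 0 := by
  have h1 : (exp (s • A) * B) i j = entryMulCLM B i j (exp (s • A)) := rfl
  rw [h1, exp_eq_tsum ℝ]
  beta_reduce
  erw [ContinuousLinearMap.map_tsum _ (expSeries_summable' (𝕂 := ℝ) (s • A))]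
  have : ∀ d : ℕ, entryMulCLM B i j (((d.factorial : ℝ))⁻¹ • (s • A) ^ d) = 0 := by
    intro d
    have : entryMulCLM B i j (((d.factorial : ℝ))⁻¹ • (s • A) ^ d)
        = ((d.factorial : ℝ))⁻¹ * (s ^ d * ((A ^ d * B) i j)) := by
      simp [entryMulCLM, smul_pow, Matrix.smul_mul, smul_smul, mul_assoc]
    rw [this, hpow, mul_zero, mul_zero]
  exact (tsum_congr this).trans tsum_zero

lemma hasDerivAt_expM (A : Matrix (Fin n) (Fin n) ℝ) (tf t : ℝ) :
    HasDerivAt (fun t : ℝ => exp ((tf - t) • A))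
      (-(exp ((tf - t) • A) * A)) t := by
  have h1 : HasDerivAt (fun s : ℝ => exp (s • A)) (exp ((tf - t) • A) * A) (tf - t) :=
    hasDerivAt_exp_smul_const A (tf - t)
  have h2 : HasDerivAt (fun t : ℝ => tf - t) (-1) t := by
    simpa using (hasDerivAt_id t).const_sub tf
  have := h1.scomp t h2
  simp [Function.comp_def] at this
  exact this

/-- Entry `M i k` as a continuous linear map in `M`. -/
noncomputable def entryCLM (i k : Fin n) : Matrix (Fin n) (Fin n) ℝ →L[ℝ] ℝ :=
  LinearMap.toContinuousLinearMap
    { toFun := fun N => N i k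
      map_add' := fun _ _ => rfl
      map_smul' := fun _ _ => rfl }

lemma not_herdable (A : Matrix (Fin n) (Fin n) ℝ) (B : Matrix (Fin n) (Fin m) ℝ)
    (i : Fin n) (hpow : ∀ (d : ℕ) (j : Fin m), (A ^ d * B) i j = 0) :
    ¬ Herdable A B Set.univ := by
  intro hH
  obtain ⟨tf, u, x, htf, hx0, hderiv, hfin⟩ := hH 0 1 zero_le_one
  have hfin' : (1 : ℝ) ≤ x tf i := hfin i (Set.mem_univ i)
  set M : ℝ → Matrix (Fin n) (Fin n) ℝ := fun t => exp ((tf - t) • A) with hM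
  set w : ℝ → ℝ := fun t => ∑ k, M t i k * x t k with hwdef
  have hrow : ∀ (t : ℝ) (j : Fin m), (M t * B) i j = 0 := fun t j =>
    exp_mul_entry_zero A B i hpow (tf - t) j
  have hw : ∀ t ∈ Set.Icc (0 : ℝ) tf, HasDerivAt w 0 t := by
    intro t ht
    have hx := hderiv t ht
    have hxk : ∀ k, HasDerivAt (fun t => x t k)
        ((A.mulVec (x t) + B.mulVec (u t)) k) t := fun k => hasDerivAt_pi.mp hx k
    have hMd : HasDerivAt M (-(M t * A)) t := hasDerivAt_expM A tf t
    have hMk : ∀ k, HasDerivAt (fun t => M t i k) ((-(M t * A)) i k) t := fun k =>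
      (entryCLM i k).hasFDerivAt.comp_hasDerivAt t hMd
    have hsum : HasDerivAt w
        (∑ k, ((-(M t * A)) i k * x t k
          + M t i k * (A.mulVec (x t) + B.mulVec (u t)) k)) t :=
      HasDerivAt.fun_sum fun k _ => (hMk k).mul (hxk k)
    have hcancel : ∑ k, (M t * A) i k * x t k = ∑ k, M t i k * (A.mulVec (x t)) k :=
      calc ∑ k, (M t * A) i k * x t k
          = ∑ k, ∑ l, M t i l * A l k * x t k := by
            simp [Matrix.mul_apply, Finset.sum_mul]
        _ = ∑ l, ∑ k, M t i l * A l k * x t k := Finset.sum_comm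
        _ = ∑ l, M t i l * (A.mulVec (x t)) l := by
            simp [Matrix.mulVec, dotProduct, Finset.mul_sum, mul_assoc]
    have hB0 : ∑ k, M t i k * (B.mulVec (u t)) k = 0 := by
      simp only [Matrix.mulVec, dotProduct, Finset.mul_sum]
      rw [Finset.sum_comm]
      refine Finset.sum_eq_zero fun j' _ => ?_
      simp_rw [← mul_assoc, ← Finset.sum_mul]
      rw [show ∑ k, M t i k * B k j' = (M t * B) i j' from (Matrix.mul_apply).symm,
        hrow t j', zero_mul]
    have hD : ∑ k, ((-(M t * A)) i k * x t k
        + M t i k * (A.mulVec (x t) + B.mulVec (u t)) k) = 0 := by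
      have hterm : ∀ k, ((-(M t * A)) i k * x t k
          + M t i k * (A.mulVec (x t) + B.mulVec (u t)) k)
          = (M t i k * (A.mulVec (x t)) k - (M t * A) i k * x t k)
            + M t i k * (B.mulVec (u t)) k := by
        intro k
        simp only [Matrix.neg_apply, Pi.add_apply]
        ring
      rw [Finset.sum_congr rfl fun k _ => hterm k, Finset.sum_add_distrib,
        Finset.sum_sub_distrib, hcancel, sub_self, hB0, add_zero]
    exact hD ▸ hsum
  have hcont : ContinuousOn w (Set.Icc 0 tf) := fun t ht =>
    (hw t ht).continuousAt.continuousWithinAt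
  have hconst := constant_of_has_deriv_right_zero hcont
    (fun t ht => (hw t (Set.Ico_subset_Icc_self ht)).hasDerivWithinAt)
  have h1 := hconst tf (Set.right_mem_Icc.mpr htf)
  have hw0 : w 0 = 0 := by simp [hwdef, hx0]
  have hwtf : w tf = x tf i := by
    simp [hwdef, hM, sub_self, Matrix.one_apply, exp_zero]
  rw [hwtf, hw0] at h1
  linarith

end AnalyticAux

/-- a completely herdable system is input connectable; equivalently, if a state
`i` is reachable from no input, then row `i` of the controllability matrix is zero and the
system is not completely herdable. -/
theorem input_connectable_of_completely_herdable
    {n m : ℕ} (A : Matrix (Fin n) (Fin n) ℝ) (B : Matrix (Fin n) (Fin m) ℝ) :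
    (Herdable A B Set.univ → ∀ i : Fin n, ∃ j : Fin m, Reach A B j i) ∧
    (∀ i : Fin n, (∀ j : Fin m, ¬ Reach A B j i) →
      (∀ c : Fin n × Fin m, ctrbMat A B i c = 0) ∧ ¬ Herdable A B Set.univ) := by
  have key : ∀ i : Fin n, (∀ j : Fin m, ¬ Reach A B j i) →
      (∀ c : Fin n × Fin m, ctrbMat A B i c = 0) ∧ ¬ Herdable A B Set.univ := by
    intro i hnr
    have hpow : ∀ (d : ℕ) (j : Fin m), (A ^ d * B) i j = 0 := by
      intro d j
      by_contra h
      exact hnr j (reach_of_pow_ne A B d i j h)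
    exact ⟨fun c => hpow c.1 c.2, not_herdable A B i hpow⟩
  refine ⟨fun hH i => ?_, key⟩
  by_contra hc
  push_neg at hc
  exact (key i hc).2 hH
end

section
/- For a single-input system whose graph is an input-rooted out-branching (there is a unique directed walk from the input u to every state node), the sets of state nodes that can be simultaneously herded are exactly the unions ⋃_{d=1}^{d_max} X_d where for each walk-length d, X_d is one of {P_d, N_d, ∅}. -/
open Matrix

/-- A set of states is herdable iff some vector in the range of the controllability matrix
is strictly positive on that set. -/
def RangeHerdable {n m : ℕ} (A : Matrix (Fin n) (Fin n) ℝ) (B : Matrix (Fin n) (Fin m) ℝ)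
    (X : Set (Fin n)) : Prop :=
  ∃ α : Fin n × Fin m → ℝ, ∀ i ∈ X, 0 < (ctrbMat A B).mulVec α i

/-- `PosSet A B d`: states whose walk from the single input of length `d+1` is positive. -/
def PosSet {n : ℕ} (A : Matrix (Fin n) (Fin n) ℝ) (B : Matrix (Fin n) (Fin 1) ℝ)
    (d : ℕ) : Set (Fin n) :=
  {i | ∃ p : Fin (d + 1) → Fin n, IsWalk A B 0 i d p ∧ 0 < walkWeight A B 0 p}

/-- `NegSet A B d`: states whose walk from the single input of length `d+1` is negative. -/
def NegSet {n : ℕ} (A : Matrix (Fin n) (Fin n) ℝ) (B : Matrix (Fin n) (Fin 1) ℝ)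
    (d : ℕ) : Set (Fin n) :=
  {i | ∃ p : Fin (d + 1) → Fin n, IsWalk A B 0 i d p ∧ walkWeight A B 0 p < 0}

section Aux

lemma snoc_weight {n m : ℕ} (A : Matrix (Fin n) (Fin n) ℝ) (B : Matrix (Fin n) (Fin m) ℝ)
    (j : Fin m) {d : ℕ} (p : Fin (d + 1) → Fin n) (k : Fin n) :
    walkWeight A B j (Fin.snoc p k : Fin (d + 2) → Fin n)
      = A k (p (Fin.last d)) * walkWeight A B j p := by
  have e0 : (Fin.snoc p k : Fin (d+2) → Fin n) 0 = p 0 := by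
    rw [show (0 : Fin (d+2)) = Fin.castSucc 0 by rfl, Fin.snoc_castSucc]
  have emid : ∀ t : Fin d.succ, (Fin.snoc p k : Fin (d+2) → Fin n) (Fin.castSucc t) = p t :=
    fun t => Fin.snoc_castSucc _ _ _
  unfold walkWeight
  rw [Fin.prod_univ_castSucc]
  simp only [Fin.succ_castSucc, emid, e0, Fin.succ_last, Fin.snoc_last]
  ring

lemma entry_eq_sum {n m : ℕ} (A : Matrix (Fin n) (Fin n) ℝ) (B : Matrix (Fin n) (Fin m) ℝ)
    (j : Fin m) (d : ℕ) (i : Fin n) :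
    (A ^ d * B) i j =
      ∑ q : Fin (d + 1) → Fin n, if q (Fin.last d) = i then walkWeight A B j q else 0 := by
  induction d generalizing i with
  | zero =>
    rw [pow_zero, Matrix.one_mul]
    rw [← (Equiv.funUnique (Fin 1) (Fin n)).symm.sum_comp]
    simp [walkWeight, Equiv.funUnique, Fin.last]
  | succ d ih =>
    have h1 : (A ^ (d+1) * B) i j = ∑ k, A i k * (A ^ d * B) k j := by
      rw [pow_succ', Matrix.mul_assoc, mul_apply]
    rw [h1]
    simp_rw [ih, Finset.mul_sum]
    rw [Finset.sum_comm]
    have h2 : ∀ q : Fin (d+1) → Fin n,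
        (∑ k, A i k * if q (Fin.last d) = k then walkWeight A B j q else 0)
        = A i (q (Fin.last d)) * walkWeight A B j q := by
      intro q
      rw [Finset.sum_eq_single (q (Fin.last d))]
      · simp
      · intro k _ hk; simp [Ne.symm hk]
      · simp
    simp_rw [h2]
    rw [← ((Fin.snocEquiv (fun _ : Fin (d+2) => Fin n)).sum_comp
      (fun q => if q (Fin.last (d+1)) = i then walkWeight A B j q else 0))]
    rw [Fintype.sum_prod_type, Finset.sum_comm]
    refine Finset.sum_congr rfl fun p _ => ?_
    rw [Finset.sum_eq_single i]
    · simp [Fin.snocEquiv, Fin.snoc_last, snoc_weight]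
    · intro k _ hk; simp [Fin.snocEquiv, Fin.snoc_last, hk]
    · simp

lemma walk_surgery {n m : ℕ} {A : Matrix (Fin n) (Fin n) ℝ} {B : Matrix (Fin n) (Fin m) ℝ}
    {j : Fin m} {i : Fin n} {d : ℕ} {p : Fin (d + 1) → Fin n}
    (hw : IsWalk A B j i d p) (hd : n ≤ d) :
    ∃ d' : ℕ, d' < d ∧ ∃ q : Fin (d' + 1) → Fin n, IsWalk A B j i d' q := by
  obtain ⟨a, b, hlt, hpab⟩ : ∃ a b : Fin (d+1), (a:ℕ) < (b:ℕ) ∧ p a = p b := by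
    obtain ⟨a, b, hab, h⟩ := Fintype.exists_ne_map_eq_of_card_lt p (by simp; omega)
    rcases lt_or_gt_of_ne (fun hv : (a:ℕ) = (b:ℕ) => hab (Fin.ext hv)) with hv | hv
    · exact ⟨a, b, hv, h⟩
    · exact ⟨b, a, hv, h.symm⟩
  set c : ℕ := (b:ℕ) - (a:ℕ) with hc
  have hbd : (b:ℕ) ≤ d := Nat.lt_succ_iff.mp b.isLt
  have hcd : 0 < c ∧ c ≤ d := by omega
  set d' : ℕ := d - c with hd'
  have hd'c : d' + c = d := by omega
  have had' : (a:ℕ) ≤ d' := by omega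
  set g : ℕ → ℕ := fun x => if x ≤ (a:ℕ) then x else x + c with hgdef
  have hg : ∀ t : Fin (d' + 1), g (t:ℕ) < d + 1 := by
    intro t
    have := t.isLt
    show (if (t:ℕ) ≤ (a:ℕ) then (t:ℕ) else (t:ℕ) + c) < d + 1
    split <;> omega
  set q : Fin (d' + 1) → Fin n := fun t => p ⟨g (t:ℕ), hg t⟩ with hqdef
  have hq : ∀ (t : Fin (d' + 1)) (v : ℕ) (hv : v < d + 1), g (t:ℕ) = v → q t = p ⟨v, hv⟩ :=
    fun t v hv h => congrArg p (Fin.ext h)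
  have step : ∀ (x : ℕ) (hx : x < d),
      A (p ⟨x + 1, by omega⟩) (p ⟨x, by omega⟩) ≠ 0 := fun x hx => hw.2.1 ⟨x, hx⟩
  refine ⟨d', by omega, q, ?_, ?_, ?_⟩
  · rw [hq 0 0 (by omega) (by show (if _ then _ else _) = _; rw [if_pos] <;> simp)]
    exact hw.1
  · intro t
    have ht : (t:ℕ) < d' := t.isLt
    rcases lt_trichotomy (t:ℕ) (a:ℕ) with h | h | h
    · rw [hq t.succ ((t:ℕ)+1) (by omega)
        (by show (if _ then _ else _) = _; simp only [Fin.val_succ]; rw [if_pos (by omega)]),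
        hq t.castSucc (t:ℕ) (by omega)
        (by show (if _ then _ else _) = _; simp only [Fin.coe_castSucc]; rw [if_pos (by omega)])]
      exact step (t:ℕ) (by omega)
    · have hbd2 : (b:ℕ) < d := by omega
      rw [hq t.succ ((b:ℕ)+1) (by omega)
        (by show (if _ then _ else _) = _; simp only [Fin.val_succ]; rw [if_neg (by omega)]; omega),
        hq t.castSucc (a:ℕ) (by omega)
        (by show (if _ then _ else _) = _; simp only [Fin.coe_castSucc]; rw [if_pos (by omega)]; omega)]
      rw [show (⟨(a:ℕ), by omega⟩ : Fin (d+1)) = a from Fin.ext rfl, hpab]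
      exact step (b:ℕ) hbd2
    · rw [hq t.succ ((t:ℕ)+c+1) (by omega)
        (by show (if _ then _ else _) = _; simp only [Fin.val_succ]; rw [if_neg (by omega)]; omega),
        hq t.castSucc ((t:ℕ)+c) (by omega)
        (by show (if _ then _ else _) = _; simp only [Fin.coe_castSucc]; rw [if_neg (by omega)])]
      exact step ((t:ℕ)+c) (by omega)
  · by_cases hcase : d' ≤ (a:ℕ)
    · have hda : d' = (a:ℕ) := le_antisymm hcase had'
      rw [hq (Fin.last d') (a:ℕ) (by omega)
        (by show (if _ then _ else _) = _; simp only [Fin.val_last]; rw [if_pos (by omega)]; omega)]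
      have hbl : b = Fin.last d := Fin.ext (by simp only [Fin.val_last]; omega)
      rw [show (⟨(a:ℕ), by omega⟩ : Fin (d+1)) = a from Fin.ext rfl, hpab]
      exact (congrArg p hbl).trans hw.2.2
    · rw [hq (Fin.last d') d (by omega)
        (by show (if _ then _ else _) = _; simp only [Fin.val_last]; rw [if_neg (by omega)]; omega)]
      rw [show (⟨d, by omega⟩ : Fin (d+1)) = Fin.last d from Fin.ext rfl]
      exact hw.2.2

lemma weight_ne_zero {n m : ℕ} {A : Matrix (Fin n) (Fin n) ℝ} {B : Matrix (Fin n) (Fin m) ℝ}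
    {j : Fin m} {i : Fin n} {d : ℕ} {p : Fin (d + 1) → Fin n} (hw : IsWalk A B j i d p) :
    walkWeight A B j p ≠ 0 :=
  mul_ne_zero hw.1 (Finset.prod_ne_zero_iff.2 fun t _ => hw.2.1 t)

lemma isWalk_of_weight_ne_zero {n m : ℕ} {A : Matrix (Fin n) (Fin n) ℝ}
    {B : Matrix (Fin n) (Fin m) ℝ} {j : Fin m} {i : Fin n} {d : ℕ} {q : Fin (d + 1) → Fin n}
    (hlast : q (Fin.last d) = i) (hne : walkWeight A B j q ≠ 0) : IsWalk A B j i d q := by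
  refine ⟨fun h => hne ?_, fun t => ?_, hlast⟩
  · unfold walkWeight; rw [h, zero_mul]
  · intro h
    apply hne
    unfold walkWeight
    rw [Finset.prod_eq_zero (Finset.mem_univ t) h, mul_zero]

section Branch

variable {n : ℕ} {A : Matrix (Fin n) (Fin n) ℝ} {B : Matrix (Fin n) (Fin 1) ℝ}

lemma walk_lt (hbranch : ∀ i : Fin n,
      ∃! w : Σ d : ℕ, Fin (d + 1) → Fin n, IsWalk A B 0 i w.1 w.2)
    {i : Fin n} {d : ℕ} {p : Fin (d + 1) → Fin n} (hw : IsWalk A B 0 i d p) : d < n := by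
  by_contra hge
  obtain ⟨d', hlt, q, hq⟩ := walk_surgery hw (not_lt.mp hge)
  obtain ⟨w, -, huniq⟩ := hbranch i
  have e1 : (⟨d, p⟩ : Σ d : ℕ, Fin (d + 1) → Fin n) = w := huniq _ hw
  have e2 : (⟨d', q⟩ : Σ d : ℕ, Fin (d + 1) → Fin n) = w := huniq _ hq
  have : d = d' := congrArg Sigma.fst (e1.trans e2.symm)
  omega

lemma entry_eq_weight (hbranch : ∀ i : Fin n,
      ∃! w : Σ d : ℕ, Fin (d + 1) → Fin n, IsWalk A B 0 i w.1 w.2)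
    {i : Fin n} {d : ℕ} {p : Fin (d + 1) → Fin n} (hw : IsWalk A B 0 i d p) :
    (A ^ d * B) i 0 = walkWeight A B 0 p := by
  rw [entry_eq_sum]
  rw [Finset.sum_eq_single p]
  · rw [if_pos hw.2.2]
  · intro q _ hqp
    by_cases hql : q (Fin.last d) = i
    · rw [if_pos hql]
      by_contra hne
      have hwq : IsWalk A B 0 i d q := isWalk_of_weight_ne_zero hql hne
      obtain ⟨w, -, huniq⟩ := hbranch i
      have e : (⟨d, q⟩ : Σ d : ℕ, Fin (d + 1) → Fin n) = ⟨d, p⟩ :=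
        (huniq _ hwq).trans (huniq _ hw).symm
      exact hqp (eq_of_heq (Sigma.mk.inj_iff.mp e).2)
    · rw [if_neg hql]
  · simp

lemma entry_eq_zero (hbranch : ∀ i : Fin n,
      ∃! w : Σ d : ℕ, Fin (d + 1) → Fin n, IsWalk A B 0 i w.1 w.2)
    {i : Fin n} {d : ℕ} {p : Fin (d + 1) → Fin n} (hw : IsWalk A B 0 i d p)
    {e : ℕ} (he : e ≠ d) : (A ^ e * B) i 0 = 0 := by
  rw [entry_eq_sum]
  apply Finset.sum_eq_zero
  intro q _
  by_cases hql : q (Fin.last e) = i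
  · rw [if_pos hql]
    by_contra hne
    have hwq : IsWalk A B 0 i e q := isWalk_of_weight_ne_zero hql hne
    obtain ⟨w, -, huniq⟩ := hbranch i
    have heq : (⟨e, q⟩ : Σ d : ℕ, Fin (d + 1) → Fin n) = ⟨d, p⟩ :=
      (huniq _ hwq).trans (huniq _ hw).symm
    exact he (congrArg Sigma.fst heq)
  · rw [if_neg hql]

lemma mulVec_eq (hbranch : ∀ i : Fin n,
      ∃! w : Σ d : ℕ, Fin (d + 1) → Fin n, IsWalk A B 0 i w.1 w.2)
    {i : Fin n} {d : ℕ} {p : Fin (d + 1) → Fin n} (hw : IsWalk A B 0 i d p)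
    (hd : d < n) (α : Fin n × Fin 1 → ℝ) :
    (ctrbMat A B).mulVec α i = walkWeight A B 0 p * α (⟨d, hd⟩, 0) := by
  rw [Matrix.mulVec, dotProduct]
  rw [Finset.sum_eq_single ((⟨d, hd⟩, 0) : Fin n × Fin 1)]
  · have : ctrbMat A B i (⟨d, hd⟩, 0) = (A ^ d * B) i 0 := rfl
    rw [this, entry_eq_weight hbranch hw]
  · rintro ⟨e, z⟩ _ hne
    have hz : z = 0 := Subsingleton.elim _ _
    subst hz
    have hed : (e : ℕ) ≠ d := by
      intro h
      exact hne (by rw [show e = (⟨d, hd⟩ : Fin n) from Fin.ext h])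
    have : ctrbMat A B i (e, 0) = (A ^ (e:ℕ) * B) i 0 := rfl
    rw [this, entry_eq_zero hbranch hw hed, zero_mul]
  · simp

end Branch
end Aux

/-- for a single-input system whose graph is an input-rooted out-branching
(every state has a unique walk from the input), the herdable sets of states are exactly
(the subsets of) the unions `⋃_d X_d` with `X_d ∈ {P_d, N_d, ∅}`: each such union is
herdable, and every herdable set is contained in such a union. -/
theorem herdable_sets_of_out_branching
    {n : ℕ} (A : Matrix (Fin n) (Fin n) ℝ) (B : Matrix (Fin n) (Fin 1) ℝ)
    (hbranch : ∀ i : Fin n,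
      ∃! w : Σ d : ℕ, Fin (d + 1) → Fin n, IsWalk A B 0 i w.1 w.2) :
    (∀ S : ℕ → Set (Fin n),
      (∀ d, S d = PosSet A B d ∨ S d = NegSet A B d ∨ S d = ∅) →
      RangeHerdable A B (⋃ d, S d)) ∧
    (∀ X : Set (Fin n), RangeHerdable A B X →
      ∃ S : ℕ → Set (Fin n),
        (∀ d, S d = PosSet A B d ∨ S d = NegSet A B d ∨ S d = ∅) ∧
        X ⊆ ⋃ d, S d) := by
  classical
  constructor
  · intro S hS
    refine ⟨fun x => if S ((x.1 : ℕ)) = PosSet A B (x.1 : ℕ) then 1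
      else if S ((x.1 : ℕ)) = NegSet A B (x.1 : ℕ) then -1 else 0, ?_⟩
    intro i hi
    obtain ⟨d, hid⟩ := Set.mem_iUnion.1 hi
    by_cases hP : S d = PosSet A B d
    · obtain ⟨p, hw, hpos⟩ := hP ▸ hid
      have hd := walk_lt hbranch hw
      rw [mulVec_eq hbranch hw hd]
      simp only [show (((⟨d, hd⟩ : Fin n), (0 : Fin 1)).1 : ℕ) = d from rfl]
      rw [if_pos hP]
      linarith
    · have hN : S d = NegSet A B d := by
        rcases hS d with h | h | h
        · exact absurd h hP
        · exact h
        · rw [h] at hid; exact absurd hid (Set.notMem_empty i)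
      obtain ⟨p, hw, hneg⟩ := hN ▸ hid
      have hd := walk_lt hbranch hw
      rw [mulVec_eq hbranch hw hd]
      simp only [show (((⟨d, hd⟩ : Fin n), (0 : Fin 1)).1 : ℕ) = d from rfl]
      rw [if_neg hP, if_pos hN]
      linarith
  · rintro X ⟨α, hα⟩
    refine ⟨fun d => if h : d < n then
        (if 0 < α (⟨d, h⟩, 0) then PosSet A B d
         else if α (⟨d, h⟩, 0) < 0 then NegSet A B d else ∅) else ∅, ?_, ?_⟩
    · intro d
      beta_reduce
      split_ifs <;> tauto
    · intro i hiX
      obtain ⟨⟨d, p⟩, hw, -⟩ := hbranch i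
      have hd := walk_lt hbranch hw
      have hval := hα i hiX
      rw [mulVec_eq hbranch hw hd α] at hval
      apply Set.mem_iUnion.2 ⟨d, ?_⟩
      beta_reduce
      rw [dif_pos hd]
      rcases mul_pos_iff.1 hval with ⟨hw0, hβ⟩ | ⟨hw0, hβ⟩
      · rw [if_pos hβ]
        exact ⟨p, hw, hw0⟩
      · rw [if_neg (not_lt.2 hβ.le), if_pos hβ]
        exact ⟨p, hw, hw0⟩
end

section
/- Consider the 4-state single-input system with A having nonzero entries A_{2,1} = -α₁, A_{3,1} = α₂, A_{4,2} = α₃, A_{4,3} = α₄ (all αᵢ > 0, all other entries zero) and B = (β₁, 0, 0, 0)ᵀ with β₁ > 0. If α₂α₄ = α₁α₃ then row 4 of the controllability matrix 𝒞 = [B, AB, A²B, A³B] is identically zero, and hence state 4 is not herdable, even though state x₄ is reachable from the input in the system graph. -/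
open Matrix

/-- The `A` matrix of the walk-weight cancellation example:
`A_{2,1} = -α₁`, `A_{3,1} = α₂`, `A_{4,2} = α₃`, `A_{4,3} = α₄`. -/
def Acancel (α₁ α₂ α₃ α₄ : ℝ) : Matrix (Fin 4) (Fin 4) ℝ :=
  !![0, 0, 0, 0; -α₁, 0, 0, 0; α₂, 0, 0, 0; 0, α₃, α₄, 0]

/-- The `B` matrix of the cancellation example: `B = (β₁, 0, 0, 0)ᵀ`. -/
def Bcancel (β₁ : ℝ) : Matrix (Fin 4) (Fin 1) ℝ :=
  !![β₁; 0; 0; 0]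

/-- in the 4-state cancellation example, if `α₂α₄ = α₁α₃` then row 4 of the
controllability matrix vanishes, state 4 is reachable from the input in the system graph,
and yet state 4 is not herdable (no vector in the range of the controllability matrix has
strictly positive 4-th entry). -/
theorem walk_weight_cancellation (α₁ α₂ α₃ α₄ β₁ : ℝ)
    (h₁ : 0 < α₁) (h₂ : 0 < α₂) (h₃ : 0 < α₃) (h₄ : 0 < α₄) (hβ : 0 < β₁)
    (hcancel : α₂ * α₄ = α₁ * α₃) :
    (∀ c : Fin 4 × Fin 1, ctrbMat (Acancel α₁ α₂ α₃ α₄) (Bcancel β₁) 3 c = 0) ∧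
    (∃ (d : ℕ) (p : Fin (d + 1) → Fin 4),
      IsWalk (Acancel α₁ α₂ α₃ α₄) (Bcancel β₁) 0 3 d p) ∧
    ¬ ∃ α : Fin 4 × Fin 1 → ℝ,
      0 < (ctrbMat (Acancel α₁ α₂ α₃ α₄) (Bcancel β₁)).mulVec α 3 := by

  have hrow : ∀ c : Fin 4 × Fin 1, ctrbMat (Acancel α₁ α₂ α₃ α₄) (Bcancel β₁) 3 c = 0 := by
    rintro ⟨d, j⟩
    fin_cases d <;> fin_cases j <;>
      simp [ctrbMat, Acancel, Bcancel, show ((3:Fin 4):ℕ)=3 from rfl, pow_succ,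
        Matrix.mul_apply, Fin.sum_univ_succ] <;>
      exact Or.inl (by linarith)
  refine ⟨hrow, ⟨2, ![0, 1, 3], ?_, ?_, ?_⟩, ?_⟩
  · simp [Bcancel]; positivity
  · intro t
    fin_cases t <;> simp [Acancel] <;> positivity
  · rfl
  · rintro ⟨α, hα⟩
    have : (ctrbMat (Acancel α₁ α₂ α₃ α₄) (Bcancel β₁)).mulVec α 3 = 0 := by
      simp [Matrix.mulVec, dotProduct]
      exact Finset.sum_eq_zero fun c _ => by rw [hrow c, zero_mul]
    linarith
end
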